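/- Let N ≥ 1 and α ∈ (0,1), let h₀ ≥ 0 satisfy 2(1 − Φ(h₀)) = α, and suppose at least one i ∈ {1,…,N} has |t_i| ≤ h₀ (equivalently P̂(h₀) < 1). Then every h ≥ 0 with P̂(h) > 0 and F̂_BH(h) ≤ α satisfies h > h₀. (The Benjamini–Hochberg 1995 algorithm, which is isomorphic to imposing π_F = 1, raises the t-statistic hurdle above the classical hurdle in all cases except the extreme case in which every t-statistic exceeds the classical hurdle.) -/
import Mathlib


open MeasureTheory ProbabilityTheory

/-- Standard normal cumulative distribution function Φ. -/
noncomputable def stdNormCDF (x : ℝ) : ℝ := ((gaussianReal 0 1) (Set.Iic x)).toReal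

/-- Empirical exceedance share P̂(h) := N⁻¹·Σ_{i=1}^N 1{|t_i| > h}. -/
noncomputable def empShare {N : ℕ} (t : Fin N → ℝ) (h : ℝ) : ℝ :=
  ((Finset.univ.filter fun i : Fin N => h < |t i|).card : ℝ) / N

/-- Benjamini–Hochberg (1995) FDR estimator F̂_BH(h) := 2(1 − Φ(h)) / P̂(h). -/
noncomputable def fdrBH {N : ℕ} (t : Fin N → ℝ) (h : ℝ) : ℝ :=
  2 * (1 - stdNormCDF h) / empShare t h

lemma stdNormCDF_strictMono : StrictMono stdNormCDF := by
  intro a b hab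
  have hpos : (gaussianReal 0 1) (Set.Ioc a b) ≠ 0 := by
    intro h0
    have := (gaussianReal_absolutelyContinuous' 0 one_ne_zero) h0
    rw [Real.volume_Ioc] at this
    rw [ENNReal.ofReal_eq_zero, sub_nonpos] at this; exact absurd this (not_le.mpr hab)
  have hsplit : (gaussianReal 0 1) (Set.Iic b)
      = (gaussianReal 0 1) (Set.Iic a) + (gaussianReal 0 1) (Set.Ioc a b) := by
    rw [← Set.Iic_union_Ioc_eq_Iic hab.le,
      measure_union (Set.Iic_disjoint_Ioc le_rfl) measurableSet_Ioc]
  have hfin : ∀ s : Set ℝ, (gaussianReal 0 1) s ≠ ⊤ := fun s => measure_ne_top _ s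
  unfold stdNormCDF
  rw [hsplit, ENNReal.toReal_add (hfin _) (hfin _)]
  have : 0 < ((gaussianReal 0 1) (Set.Ioc a b)).toReal :=
    ENNReal.toReal_pos hpos (hfin _)
  linarith

/-- The Benjamini–Hochberg 1995 algorithm raises the t-statistic hurdle above
the classical hurdle in all cases except the extreme case in which every
t-statistic exceeds the classical hurdle. -/
theorem bh_hurdle_raised
    {N : ℕ} (hN : 1 ≤ N) (t : Fin N → ℝ)
    (α : ℝ) (hα : α ∈ Set.Ioo (0 : ℝ) 1)
    (h₀ : ℝ) (h₀_nonneg : 0 ≤ h₀)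
    (hclassical : 2 * (1 - stdNormCDF h₀) = α)
    (hsome : ∃ i : Fin N, |t i| ≤ h₀) :
    ∀ h : ℝ, 0 ≤ h → 0 < empShare t h → fdrBH t h ≤ α → h₀ < h := by
  intro h hh hP hle
  by_contra hcon
  push_neg at hcon
  have hNpos : (0 : ℝ) < N := by exact_mod_cast hN
  have hP1 : empShare t h ≤ 1 := by
    unfold empShare
    rw [div_le_one hNpos]
    exact_mod_cast (Finset.card_filter_le _ _).trans (le_of_eq (Finset.card_fin N))
  rcases lt_or_eq_of_le hcon with hlt | heq
  · have hΦ : stdNormCDF h < stdNormCDF h₀ := stdNormCDF_strictMono hlt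
    have hA : α < 2 * (1 - stdNormCDF h) := by linarith
    have hA' : 2 * (1 - stdNormCDF h) ≤ fdrBH t h := by
      unfold fdrBH
      rw [le_div_iff₀ hP]
      nlinarith [mul_nonneg (hα.1.trans hA).le (sub_nonneg.mpr hP1)]
    linarith
  · subst heq
    obtain ⟨i, hi⟩ := hsome
    have hnotmem : i ∉ Finset.univ.filter fun j : Fin N => h < |t j| := by
      simp [not_lt.mpr hi]
    have hcard : ((Finset.univ.filter fun j : Fin N => h < |t j|).card : ℝ) < N := by
      have h1 : (Finset.univ.filter fun j : Fin N => h < |t j|).card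
          < (Finset.univ : Finset (Fin N)).card :=
        Finset.card_lt_card ⟨Finset.filter_subset _ _,
          fun hsub => hnotmem (hsub (Finset.mem_univ i))⟩
      have h2 : (Finset.univ : Finset (Fin N)).card = N := by simp
      rw [h2] at h1
      exact_mod_cast h1
    have hPlt1 : empShare t h < 1 := by
      unfold empShare
      rw [div_lt_one hNpos]
      exact hcard
    have : α < fdrBH t h := by
      unfold fdrBH
      rw [hclassical, lt_div_iff₀ hP]
      nlinarith [hα.1, mul_pos hα.1 hP]
    linarith
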